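/- arXiv:1811.05095 — 2 statements merged into one kernel-verified Lean document; each statement's English description precedes it below -/
import Mathlib

section
/- If x_{t+1} = x_t - η ∇f_t(x_t) for all t and ‖x_s - x_{s'}‖ ≤ M for all s, s', then ‖Σ_{s=t-w+1}^{t} ∇f_s(x_s)‖ ≤ M/η, and hence the w-local regret PR_w(T) = Σ_{t=1}^T ‖(1/w) Σ_{s=t-w+1}^{t} ∇f_s(x_s)‖² is at most M²T/(w²η²). -/
open Finset
open scoped InnerProductSpace

private lemma telescope {d : ℕ} (x : ℕ → EuclideanSpace ℝ (Fin d)) (a : ℕ) :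
    ∀ t, a ≤ t → ∑ s ∈ Finset.Icc a t, (x s - x (s + 1)) = x a - x (t + 1) := by
  intro t ht
  induction t with
  | zero =>
    interval_cases a
    simp
  | succ n ih =>
    rcases Nat.lt_or_ge a (n + 1) with h | h
    · rw [Finset.sum_Icc_succ_top (by omega), ih (by omega)]
      abel
    · have : a = n + 1 := by omega
      subst this
      simp

theorem stmt_1 {d : ℕ} (f : ℕ → EuclideanSpace ℝ (Fin d) → ℝ)
    (x : ℕ → EuclideanSpace ℝ (Fin d)) (η M : ℝ) (hη : 0 < η)
    (hupd : ∀ s, x (s + 1) = x s - η • gradient (f s) (x s))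
    (hdiam : ∀ s s', ‖x s - x s'‖ ≤ M)
    (T w : ℕ) (hw : 1 ≤ w) :
    (∀ t, 1 ≤ t →
      ‖∑ s ∈ Finset.Icc (t - w + 1) t, gradient (f s) (x s)‖ ≤ M / η) ∧
    ∑ t ∈ Finset.Icc 1 T,
        ‖(1 / (w : ℝ)) • ∑ s ∈ Finset.Icc (t - w + 1) t, gradient (f s) (x s)‖ ^ 2
      ≤ M ^ 2 * T / ((w : ℝ) ^ 2 * η ^ 2) := by
  have key : ∀ t : ℕ, 1 ≤ t →
      ‖∑ s ∈ Finset.Icc (t - w + 1) t, gradient (f s) (x s)‖ ≤ M / η := by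
    intro t ht
    set a := t - w + 1 with ha
    have hat : a ≤ t := by omega
    have hsum : η • ∑ s ∈ Finset.Icc a t, gradient (f s) (x s)
        = x a - x (t + 1) := by
      rw [Finset.smul_sum]
      rw [← telescope x a t hat]
      refine Finset.sum_congr rfl fun s _ => ?_
      rw [hupd s]
      abel
    have hnorm : η * ‖∑ s ∈ Finset.Icc a t, gradient (f s) (x s)‖ ≤ M := by
      calc η * ‖∑ s ∈ Finset.Icc a t, gradient (f s) (x s)‖
          = ‖η • ∑ s ∈ Finset.Icc a t, gradient (f s) (x s)‖ := by
            rw [norm_smul, Real.norm_eq_abs, abs_of_pos hη]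
        _ = ‖x a - x (t + 1)‖ := by rw [hsum]
        _ ≤ M := hdiam a (t + 1)
    rw [le_div_iff₀ hη]
    linarith [hnorm]
  refine ⟨key, ?_⟩
  have hw0 : (0 : ℝ) < (w : ℝ) := by exact_mod_cast hw
  have hM0 : 0 ≤ M := le_trans (by simp) (hdiam 0 0)
  have hbound : ∀ t ∈ Finset.Icc 1 T,
      ‖(1 / (w : ℝ)) • ∑ s ∈ Finset.Icc (t - w + 1) t, gradient (f s) (x s)‖ ^ 2
      ≤ M ^ 2 / ((w : ℝ) ^ 2 * η ^ 2) := by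
    intro t htmem
    have ht : 1 ≤ t := (Finset.mem_Icc.mp htmem).1
    have h1 := key t ht
    have hn : ‖(1 / (w : ℝ)) • ∑ s ∈ Finset.Icc (t - w + 1) t, gradient (f s) (x s)‖
        = (1 / (w : ℝ)) * ‖∑ s ∈ Finset.Icc (t - w + 1) t, gradient (f s) (x s)‖ := by
      rw [norm_smul, Real.norm_eq_abs, abs_of_pos (by positivity)]
    rw [hn]
    have hnn : 0 ≤ ‖∑ s ∈ Finset.Icc (t - w + 1) t, gradient (f s) (x s)‖ := norm_nonneg _
    have : (1 / (w : ℝ)) * ‖∑ s ∈ Finset.Icc (t - w + 1) t, gradient (f s) (x s)‖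
        ≤ (1 / (w : ℝ)) * (M / η) := by
      exact mul_le_mul_of_nonneg_left h1 (by positivity)
    calc ((1 / (w : ℝ)) * ‖∑ s ∈ Finset.Icc (t - w + 1) t, gradient (f s) (x s)‖) ^ 2
        ≤ ((1 / (w : ℝ)) * (M / η)) ^ 2 :=
          pow_le_pow_left₀ (by positivity) this 2
      _ = M ^ 2 / ((w : ℝ) ^ 2 * η ^ 2) := by rw [mul_pow, div_pow, div_pow, one_pow, div_mul_div_comm, one_mul]
  calc ∑ t ∈ Finset.Icc 1 T,
        ‖(1 / (w : ℝ)) • ∑ s ∈ Finset.Icc (t - w + 1) t, gradient (f s) (x s)‖ ^ 2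
      ≤ ∑ t ∈ Finset.Icc 1 T, M ^ 2 / ((w : ℝ) ^ 2 * η ^ 2) :=
        Finset.sum_le_sum hbound
    _ = (T : ℝ) * (M ^ 2 / ((w : ℝ) ^ 2 * η ^ 2)) := by
        rw [Finset.sum_const, Nat.card_Icc]
        simp [nsmul_eq_mul]
    _ = M ^ 2 * T / ((w : ℝ) ^ 2 * η ^ 2) := by ring
end

section
/- Let K ⊆ ℝ^d be a nonempty closed convex set, x_t ∈ K, u ∈ ℝ^d, u_t = proj_K(x_t + u), u_{t+1} = proj_K(x_{t+1} + u), y_{t+1} = x_t - η_t ∇f_t(x_t), x_{t+1} = proj_K(y_{t+1}), and suppose ‖∇f_t(x_t)‖ ≤ G. Then η_t ⟨u_t - x_t, ∇f_t(x_t)⟩ ≥ ⟨u_t - u_{t+1}, u⟩ + (1/2)(‖u_{t+1} - x_{t+1}‖² - ‖u_t - x_t‖²) - η_t² G². -/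
open scoped InnerProductSpace

lemma proj_inner_aux {E : Type*} [NormedAddCommGroup E] [InnerProductSpace ℝ E]
    {K : Set E} (hconv : Convex ℝ K) {v p : E} (hp : p ∈ K)
    (hmin : ∀ z ∈ K, ‖v - p‖ ≤ ‖v - z‖) : ∀ w ∈ K, ⟪v - p, w - p⟫_ℝ ≤ 0 := by
  haveI : Nonempty K := Set.Nonempty.to_subtype ⟨p, hp⟩
  have hinf : ‖v - p‖ = ⨅ w : K, ‖v - w‖ := by
    refine le_antisymm (le_ciInf fun w => hmin w w.2) ?_
    exact ciInf_le ⟨0, by rintro _ ⟨w, rfl⟩; positivity⟩ (⟨p, hp⟩ : K)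
  exact (norm_eq_iInf_iff_real_inner_le_zero hconv hp).mp hinf

theorem stmt_8 {d : ℕ} (K : Set (EuclideanSpace ℝ (Fin d)))
    (hK : K.Nonempty) (hKc : IsClosed K) (hKconv : Convex ℝ K)
    (f : EuclideanSpace ℝ (Fin d) → ℝ)
    (xt xt1 yt1 ut ut1 u : EuclideanSpace ℝ (Fin d)) (ηt G : ℝ) (hη : 0 < ηt)
    (hxt : xt ∈ K)
    (hy : yt1 = xt - ηt • gradient f xt)
    (hx1K : xt1 ∈ K) (hx1proj : ∀ z ∈ K, ‖yt1 - xt1‖ ≤ ‖yt1 - z‖)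
    (hutK : ut ∈ K) (hutproj : ∀ z ∈ K, ‖xt + u - ut‖ ≤ ‖xt + u - z‖)
    (hut1K : ut1 ∈ K) (hut1proj : ∀ z ∈ K, ‖xt1 + u - ut1‖ ≤ ‖xt1 + u - z‖)
    (hG : ‖gradient f xt‖ ≤ G) :
    ηt * ⟪ut - xt, gradient f xt⟫_ℝ
      ≥ ⟪ut - ut1, u⟫_ℝ + (1 / 2) * (‖ut1 - xt1‖ ^ 2 - ‖ut - xt‖ ^ 2)
        - ηt ^ 2 * G ^ 2 := by
  set g := gradient f xt with hg
  -- obtuse angle at xt1 (projection of yt1), applied to ut ∈ K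
  have h1 : ⟪yt1 - xt1, ut - xt1⟫_ℝ ≤ 0 :=
    proj_inner_aux hKconv hx1K hx1proj ut hutK
  rw [hy] at h1
  -- nonexpansiveness: ut1 is projection of xt1 + u, ut ∈ K
  have h2sq : ‖xt1 + u - ut1‖ ^ 2 ≤ ‖xt1 + u - ut‖ ^ 2 :=
    pow_le_pow_left₀ (norm_nonneg _) (hut1proj ut hutK) 2
  have hGnn : 0 ≤ G := le_trans (norm_nonneg _) hG
  set N := ‖xt1 - xt‖ with hNdef
  set P := ηt * (N * G) with hPdef
  -- Cauchy–Schwarz scaled by ηt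
  have hcs2 : ηt * (-⟪xt1 - xt, g⟫_ℝ) ≤ P := by
    have h0 := abs_real_inner_le_norm (xt1 - xt) g
    have h' := neg_abs_le ⟪xt1 - xt, g⟫_ℝ
    have hNg : N * ‖g‖ ≤ N * G := mul_le_mul_of_nonneg_left hG (norm_nonneg _)
    have : -⟪xt1 - xt, g⟫_ℝ ≤ N * G := by linarith
    calc ηt * (-⟪xt1 - xt, g⟫_ℝ) ≤ ηt * (N * G) :=
          mul_le_mul_of_nonneg_left this hη.le
      _ = P := rfl
  have hsq2 : 2 * P ≤ ηt ^ 2 * G ^ 2 + N ^ 2 := by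
    nlinarith [sq_nonneg (ηt * G - N)]
  have hN : N ^ 2 = ⟪xt1 - xt, xt1 - xt⟫_ℝ := (real_inner_self_eq_norm_sq _).symm
  rw [← real_inner_self_eq_norm_sq, ← real_inner_self_eq_norm_sq]
  rw [← real_inner_self_eq_norm_sq, ← real_inner_self_eq_norm_sq] at h2sq
  simp only [inner_sub_left, inner_sub_right, inner_add_left, inner_add_right,
    real_inner_smul_left, real_inner_smul_right, inner_neg_left, inner_neg_right] at h1 h2sq hcs2 hN ⊢
  have c1 : ⟪xt, xt1⟫_ℝ = ⟪xt1, xt⟫_ℝ := real_inner_comm _ _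
  have c2 : ⟪xt, ut⟫_ℝ = ⟪ut, xt⟫_ℝ := real_inner_comm _ _
  have c3 : ⟪xt, ut1⟫_ℝ = ⟪ut1, xt⟫_ℝ := real_inner_comm _ _
  have c4 : ⟪xt, u⟫_ℝ = ⟪u, xt⟫_ℝ := real_inner_comm _ _
  have c5 : ⟪xt, g⟫_ℝ = ⟪g, xt⟫_ℝ := real_inner_comm _ _
  have c6 : ⟪xt1, ut⟫_ℝ = ⟪ut, xt1⟫_ℝ := real_inner_comm _ _
  have c7 : ⟪xt1, ut1⟫_ℝ = ⟪ut1, xt1⟫_ℝ := real_inner_comm _ _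
  have c8 : ⟪xt1, u⟫_ℝ = ⟪u, xt1⟫_ℝ := real_inner_comm _ _
  have c9 : ⟪xt1, g⟫_ℝ = ⟪g, xt1⟫_ℝ := real_inner_comm _ _
  have c10 : ⟪ut, ut1⟫_ℝ = ⟪ut1, ut⟫_ℝ := real_inner_comm _ _
  have c11 : ⟪ut, u⟫_ℝ = ⟪u, ut⟫_ℝ := real_inner_comm _ _
  have c12 : ⟪ut, g⟫_ℝ = ⟪g, ut⟫_ℝ := real_inner_comm _ _
  have c13 : ⟪ut1, u⟫_ℝ = ⟪u, ut1⟫_ℝ := real_inner_comm _ _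
  have c14 : ⟪ut1, g⟫_ℝ = ⟪g, ut1⟫_ℝ := real_inner_comm _ _
  have c15 : ⟪u, g⟫_ℝ = ⟪g, u⟫_ℝ := real_inner_comm _ _
  simp only [c1, c2, c3, c4, c5, c6, c7, c8, c9, c10, c11, c12, c13, c14, c15] at h1 h2sq hcs2 hN ⊢
  have hPdef' : P = ηt * N * G := by rw [hPdef]; ring
  ring_nf at h1 h2sq hcs2 hN ⊢
  have hp2 : 0 ≤ ηt ^ 2 * G ^ 2 := by positivity
  linarith [h1, h2sq, hcs2, hsq2, hN, hPdef', hp2]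
end
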